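/- For every L > 0 and all fixed k, n ∈ ℕ: ∫_{C_n(L) ∩ [k, ∞)} (r^k/k!) e^{-r} dr ≤ ∫_{C_n(L) + k} (r^k/k!) e^{-r} dr, where C_n(L) + k = {x + k : x ∈ C_n(L)}. -/

import Mathlib

open Real MeasureTheory

/-- The `n`-iterate mid-third Cantor set based in `[0, L]`:
`C₀(L) = [0,L]` and `C_{n+1}(L) = (1/3)·C_n(L) ∪ (2L/3 + (1/3)·C_n(L))`. -/
def cantorIterate : ℕ → ℝ → Set ℝ
  | 0, L => Set.Icc 0 L
  | n + 1, L =>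
      (fun x => x / 3) '' cantorIterate n L ∪
        (fun x => 2 * L / 3 + x / 3) '' cantorIterate n L

/-! The measure of `C_n(L)` inside a window `[a, b]` with `a ≥ 0` is largest when the window is
pushed to the left end, `[0, b - a]`; this is proved by induction along the self-similarity
`C_{n+1} = (C_n ∪ (C_n + 2L)) / 3`. Since `f_k` is nonnegative and decreasing on `[k, ∞)`, its
superlevel sets there are initial segments `[k, u]` (up to an endpoint), so by the layer-cake
formula it suffices to compare `C_n ∩ [k, u]` with `(C_n + k) ∩ [k, u] = (C_n ∩ [0, u - k]) + k`,
which is the window inequality. -/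

open Set

section Majorization

variable {μ : Measure ℝ} [NullSingletonClass μ] {A B : Set ℝ}

theorem IsLowerSet.measure_inter_le_of_forall_Iic {T : Set ℝ} (hT : IsLowerSet T)
    (hAB : ∀ u, μ (A ∩ Iic u) ≤ μ (B ∩ Iic u)) : μ (A ∩ T) ≤ μ (B ∩ T) := by
  rcases T.eq_empty_or_nonempty with rfl | hne
  · simp
  by_cases hbdd : BddAbove T
  · have hTu : T ⊆ Iic (sSup T) := fun x hx => le_csSup hbdd hx
    have huT : Iio (sSup T) ⊆ T := fun x hx => by
      obtain ⟨y, hyT, hxy⟩ := exists_lt_of_lt_csSup hne hx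
      exact hT hxy.le hyT
    calc μ (A ∩ T) ≤ μ (A ∩ Iic (sSup T)) := measure_mono (inter_subset_inter_right _ hTu)
      _ ≤ μ (B ∩ Iic (sSup T)) := hAB _
      _ = μ (B ∩ Iio (sSup T)) := measure_congr ((ae_eq_refl B).inter Iio_ae_eq_Iic).symm
      _ ≤ μ (B ∩ T) := measure_mono (inter_subset_inter_right _ huT)
  · have hT_univ : T = univ := eq_univ_of_forall fun x => by
      obtain ⟨y, hyT, hxy⟩ := not_bddAbove_iff.1 hbdd x
      exact hT hxy.le hyT
    have hmono : ∀ S : Set ℝ, Monotone fun u => S ∩ Iic u :=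
      fun S u v huv => inter_subset_inter_right _ (Iic_subset_Iic.2 huv)
    calc μ (A ∩ T) = ⨆ u, μ (A ∩ Iic u) := by
          rw [← (hmono A).measure_iUnion, ← inter_iUnion, iUnion_Iic, hT_univ]
      _ ≤ ⨆ u, μ (B ∩ Iic u) := iSup_mono hAB
      _ = μ (B ∩ T) := by
          rw [← (hmono B).measure_iUnion, ← inter_iUnion, iUnion_Iic, hT_univ]

theorem setIntegral_le_setIntegral_of_antitoneOn {a : ℝ} {f : ℝ → ℝ}
    (hA : A ⊆ Ici a) (hB : B ⊆ Ici a) (hf : AntitoneOn f (Ici a))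
    (hf_nonneg : ∀ r ∈ Ici a, 0 ≤ f r) (hfm : Measurable f) (hfB : IntegrableOn f B μ)
    (hAB : ∀ u, μ (A ∩ Iic u) ≤ μ (B ∩ Iic u)) :
    ∫ r in A, f r ∂μ ≤ ∫ r in B, f r ∂μ := by
  have hnonneg : ∀ S ⊆ Ici a, 0 ≤ᵐ[μ.restrict S] f := fun S hS =>
    ae_restrict_of_ae_restrict_of_subset hS
      (ae_restrict_of_forall_mem measurableSet_Ici hf_nonneg)
  rw [integral_eq_lintegral_of_nonneg_ae (hnonneg A hA) hfm.aestronglyMeasurable,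
    integral_eq_lintegral_of_nonneg_ae (hnonneg B hB) hfm.aestronglyMeasurable]
  refine ENNReal.toReal_mono hfB.lintegral_lt_top.ne ?_
  rw [lintegral_eq_lintegral_meas_lt _ (hnonneg A hA) hfm.aemeasurable,
    lintegral_eq_lintegral_meas_lt _ (hnonneg B hB) hfm.aemeasurable]
  refine lintegral_mono fun t => ?_
  -- the superlevel set `{t < f}` meets `Ici a` in an initial segment of `Ici a`
  set T := {r | a ≤ r → t < f r}
  have hT : IsLowerSet T := fun x y hyx hx ha =>
    (hx (ha.trans hyx)).trans_le (hf ha (ha.trans hyx) hyx)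
  have hS : ∀ S ⊆ Ici a, {r | t < f r} ∩ S = S ∩ T := fun S hS => by
    ext r
    exact ⟨fun ⟨h, hr⟩ => ⟨hr, fun _ => h⟩, fun ⟨hr, h⟩ => ⟨h (hS hr), hr⟩⟩
  rw [Measure.restrict_apply (measurableSet_lt measurable_const hfm),
    Measure.restrict_apply (measurableSet_lt measurable_const hfm), hS A hA, hS B hB]
  exact hT.measure_inter_le_of_forall_Iic hAB

end Majorization

theorem volume_image_add_const_inter (S T : Set ℝ) (d : ℝ) :
    volume ((· + d) '' S ∩ T) = volume (S ∩ (· + d) ⁻¹' T) := by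
  rw [← image_inter_preimage, image_add_right, measure_preimage_add_right]

def IsLeftConcentrated (C : Set ℝ) : Prop :=
  ∀ a b, 0 ≤ a → volume (C ∩ Icc a b) ≤ volume (C ∩ Icc 0 (b - a))

theorem isLeftConcentrated_Icc (L : ℝ) : IsLeftConcentrated (Icc 0 L) := by
  intro a b ha
  rw [Icc_inter_Icc, Icc_inter_Icc, Real.volume_Icc, Real.volume_Icc, max_eq_right ha, max_self,
    sub_zero]
  exact ENNReal.ofReal_le_ofReal <|
    le_min (by linarith [min_le_left L b]) (by linarith [min_le_right L b])

theorem IsLeftConcentrated.image_div {C : Set ℝ} (hC : IsLeftConcentrated C) {c : ℝ}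
    (hc : 0 < c) :
    IsLeftConcentrated ((· / c) '' C) := by
  have hvol : ∀ x y, volume ((· / c) '' C ∩ Icc x y) =
      ENNReal.ofReal |c⁻¹| * volume (C ∩ Icc (x * c) (y * c)) := fun x y => by
    rw [← Real.volume_preimage_mul_right hc.ne']
    congr 1
    ext r
    simp only [mem_inter_iff, mem_image, mem_preimage, mem_Icc, mul_le_mul_iff_left₀ hc]
    constructor
    · rintro ⟨⟨s, hs, rfl⟩, h⟩
      simpa [hc.ne'] using And.intro hs h
    · rintro ⟨hs, h⟩
      exact ⟨⟨r * c, hs, by field_simp⟩, h⟩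
  intro a b ha
  rw [hvol, hvol, zero_mul, sub_mul]
  gcongr ENNReal.ofReal |c⁻¹| * ?_
  exact hC _ _ (by positivity)

section TwoCopies

variable {C : Set ℝ} {L x y : ℝ}

theorem volume_inter_Icc_eq_zero_of_nonpos (hCsub : C ⊆ Icc 0 L) (hy : y ≤ 0) :
    volume (C ∩ Icc x y) = 0 :=
  measure_mono_null (fun _ ⟨hc, _, hcy⟩ => le_antisymm (hcy.trans hy) (hCsub hc).1)
    (measure_singleton 0)

theorem volume_inter_Icc_eq_zero_of_le (hCsub : C ⊆ Icc 0 L) (hx : L ≤ x) :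
    volume (C ∩ Icc x y) = 0 :=
  measure_mono_null (fun _ ⟨hc, hxc, _⟩ => le_antisymm (hCsub hc).2 (hx.trans hxc))
    (measure_singleton L)

theorem inter_Icc_eq_of_nonpos (hCsub : C ⊆ Icc 0 L) (hx : x ≤ 0) :
    C ∩ Icc x y = C ∩ Icc 0 y := by
  ext c
  exact ⟨fun ⟨hc, _, hcy⟩ => ⟨hc, (hCsub hc).1, hcy⟩,
    fun ⟨hc, _, hcy⟩ => ⟨hc, hx.trans (hCsub hc).1, hcy⟩⟩

theorem volume_union_image_add_inter_Icc (hCm : MeasurableSet C) (hCsub : C ⊆ Icc 0 L) {d : ℝ}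
    (hd : L < d) :
    volume ((C ∪ (· + d) '' C) ∩ Icc x y) =
      volume (C ∩ Icc x y) + volume (C ∩ Icc (x - d) (y - d)) := by
  have hdisj : Disjoint C ((· + d) '' C) := disjoint_left.2 fun c hc ⟨c', hc', hcc'⟩ => by
    linarith [(hCsub hc).2, (hCsub hc').1]
  rw [union_inter_distrib_right, measure_union' (hdisj.mono inter_subset_left inter_subset_left)
    (hCm.inter measurableSet_Icc), volume_image_add_const_inter, preimage_add_const_Icc]

theorem volume_inter_Icc_eq_add (hCm : MeasurableSet C) {z : ℝ} (hxz : x ≤ z) (hzy : z ≤ y) :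
    volume (C ∩ Icc x y) = volume (C ∩ Icc x z) + volume (C ∩ Ioc z y) := by
  rw [← Icc_union_Ioc_eq_Icc hxz hzy, inter_union_distrib_left,
    measure_union _ (hCm.inter measurableSet_Ioc)]
  exact disjoint_left.2 fun c (hc : c ∈ C ∩ Icc x z) (hc' : c ∈ C ∩ Ioc z y) =>
    absurd hc'.2.1 (not_lt.2 hc.2.2)

theorem IsLeftConcentrated.union_image_add (hC : IsLeftConcentrated C) (hCm : MeasurableSet C)
    (hCsub : C ⊆ Icc 0 L) (hL : 0 < L) {d : ℝ} (hd : 2 * L ≤ d) :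
    IsLeftConcentrated (C ∪ (· + d) '' C) := by
  intro α β hα
  rw [volume_union_image_add_inter_Icc hCm hCsub (by linarith),
    volume_union_image_add_inter_Icc hCm hCsub (by linarith),
    inter_Icc_eq_of_nonpos hCsub (by linarith : 0 - d ≤ 0)]
  rcases le_or_gt β d with hβ | hβ
  · rw [volume_inter_Icc_eq_zero_of_nonpos hCsub (by linarith : β - d ≤ 0), add_zero]
    exact le_add_right (hC α β hα)
  rcases le_or_gt d α with hα' | hα'
  · rw [volume_inter_Icc_eq_zero_of_le hCsub (by linarith : L ≤ α), zero_add,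
      show β - α = β - d - (α - d) by ring]
    exact le_add_right (hC _ _ (by linarith))
  -- the window meets both copies
  rw [inter_Icc_eq_of_nonpos hCsub (by linarith : α - d ≤ 0)]
  rcases le_or_gt d (β - α) with hs | hs
  · have hleft : volume (C ∩ Icc α (β - d)) ≤ volume (C ∩ Icc 0 (β - α - d)) := by
      simpa only [show β - d - α = β - α - d by ring] using hC α (β - d) hα
    have hright : volume (C ∩ Ioc (β - d) β) + volume (C ∩ Icc 0 (β - d)) ≤
        volume (C ∩ Icc 0 (β - α)) := by
      rw [add_comm, ← volume_inter_Icc_eq_add hCm (by linarith) (by linarith)]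
      exact measure_mono fun c ⟨hc, hc0, _⟩ => ⟨hc, hc0, by linarith [(hCsub hc).2]⟩
    rw [volume_inter_Icc_eq_add hCm (by linarith : α ≤ β - d) (by linarith : β - d ≤ β)]
    calc _ ≤ volume (C ∩ Icc 0 (β - α - d)) +
          (volume (C ∩ Ioc (β - d) β) + volume (C ∩ Icc 0 (β - d))) := by
          rw [add_assoc]; gcongr
      _ ≤ _ := by rw [add_comm]; gcongr
  · rw [volume_inter_Icc_eq_add hCm (by linarith : 0 ≤ β - d) (by linarith : β - d ≤ β - α),
      add_comm]
    have hsub : C ∩ Icc α β ⊆ C ∩ Ioc (β - d) (β - α) := fun c ⟨hc, hαc, _⟩ =>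
      ⟨hc, by linarith, by linarith [(hCsub hc).2]⟩
    exact le_add_right (add_le_add_right (measure_mono hsub) _)

end TwoCopies

theorem cantorIterate_subset_Icc (n : ℕ) (L : ℝ) : cantorIterate n L ⊆ Icc 0 L := by
  induction n with
  | zero => exact subset_rfl
  | succ n ih =>
    rintro _ (⟨x, hx, rfl⟩ | ⟨x, hx, rfl⟩) <;> obtain ⟨h0, hL⟩ := ih hx <;>
      constructor <;> linarith

theorem isCompact_cantorIterate (n : ℕ) (L : ℝ) : IsCompact (cantorIterate n L) := by
  induction n with
  | zero => exact isCompact_Icc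
  | succ n ih => exact (ih.image (by fun_prop)).union (ih.image (by fun_prop))

theorem cantorIterate_succ (n : ℕ) (L : ℝ) :
    cantorIterate (n + 1) L =
      (· / 3) '' (cantorIterate n L ∪ (· + 2 * L) '' cantorIterate n L) := by
  rw [cantorIterate, image_union, image_image]
  congr 2
  funext x
  ring

theorem antitoneOn_pow_div_factorial_mul_exp_neg (k : ℕ) :
    AntitoneOn (fun r : ℝ => r ^ k / (Nat.factorial k) * exp (-r)) (Ici (k : ℝ)) := by
  have hderiv : ∀ x : ℝ, HasDerivAt (fun r : ℝ => r ^ k / (Nat.factorial k) * exp (-r))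
      (k * x ^ (k - 1) / (Nat.factorial k) * exp (-x) +
        x ^ k / (Nat.factorial k) * (exp (-x) * -1)) x := fun x =>
    ((hasDerivAt_pow k x).div_const _).mul ((hasDerivAt_exp (-x)).comp x (hasDerivAt_neg x))
  refine antitoneOn_of_deriv_nonpos (convex_Ici _) (by fun_prop)
    (fun x _ => (hderiv x).differentiableAt.differentiableWithinAt) fun x hx => ?_
  rw [interior_Ici, mem_Ioi] at hx
  rw [(hderiv x).deriv]
  rcases Nat.eq_zero_or_pos k with rfl | hk
  · simpa using (exp_pos (-x)).le
  · have hx0 : 0 ≤ x := (Nat.cast_nonneg k).trans hx.le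
    have hpow : x ^ k = x * x ^ (k - 1) := by rw [← pow_succ', Nat.sub_add_cancel hk]
    calc _ = (k - x) * (x ^ (k - 1) * exp (-x) / (Nat.factorial k)) := by rw [hpow]; ring
      _ ≤ 0 := mul_nonpos_of_nonpos_of_nonneg (by linarith) (by positivity)

theorem isLeftConcentrated_cantorIterate {L : ℝ} (hL : 0 < L) (n : ℕ) :
    IsLeftConcentrated (cantorIterate n L) := by
  induction n with
  | zero => exact isLeftConcentrated_Icc L
  | succ n ih =>
    rw [cantorIterate_succ]
    exact (ih.union_image_add (isCompact_cantorIterate n L).measurableSet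
      (cantorIterate_subset_Icc n L) hL le_rfl).image_div three_pos

/-- For every `L > 0` and `k, n ∈ ℕ`:
`∫_{C_n(L) ∩ [k,∞)} f_k(r) dr ≤ ∫_{C_n(L)+k} f_k(r) dr`. -/
theorem cantor_integral_right_tail_le_shifted (L : ℝ) (hL : 0 < L) (k n : ℕ) :
    (∫ r in cantorIterate n L ∩ Set.Ici (k : ℝ),
        r ^ k / (Nat.factorial k) * Real.exp (-r)) ≤
      ∫ r in (fun x : ℝ => x + (k : ℝ)) '' cantorIterate n L,
        r ^ k / (Nat.factorial k) * Real.exp (-r) := by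
  set C := cantorIterate n L
  have hCsub : C ⊆ Icc 0 L := cantorIterate_subset_Icc n L
  have hB : (· + (k : ℝ)) '' C ⊆ Ici (k : ℝ) := by
    rintro _ ⟨x, hx, rfl⟩
    exact le_add_of_nonneg_left (hCsub hx).1
  refine setIntegral_le_setIntegral_of_antitoneOn inter_subset_right hB
    (antitoneOn_pow_div_factorial_mul_exp_neg k)
    (fun r hr => by have : (0 : ℝ) ≤ r := (Nat.cast_nonneg k).trans hr; positivity)
    (by fun_prop) ((by fun_prop : Continuous _).continuousOn.integrableOn_compact
      ((isCompact_cantorIterate n L).image (continuous_add_const _))) fun u => ?_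
  calc volume (C ∩ Ici (k : ℝ) ∩ Iic u) = volume (C ∩ Icc (k : ℝ) u) := by
        rw [inter_assoc, Ici_inter_Iic]
    _ ≤ volume (C ∩ Icc 0 (u - k)) :=
        isLeftConcentrated_cantorIterate hL n _ _ (Nat.cast_nonneg k)
    _ = volume ((· + (k : ℝ)) '' C ∩ Iic u) := by
        rw [volume_image_add_const_inter, preimage_add_const_Iic, ← Ici_inter_Iic, ← inter_assoc,
          inter_eq_left.2 (hCsub.trans Icc_subset_Ici_self)]
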